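/- Let k be a positive integer. Consider a 2-coloured complete graph whose vertex set is partitioned into sets R and B, each of size at least 2^{5k}, such that R contains no blue copy of K_k and B contains no red copy of K_k. Then there exists a (k,k)-join whose red part is contained in R and whose blue part is contained in B. -/

import Mathlib

open Finset

/-- There is a copy (subgraph embedding) of `H` in `G` whose image lies in `A`. -/
def SimpleGraph.CopyIn {W V : Type*} (H : SimpleGraph W) (G : SimpleGraph V) (A : Set V) :
    Prop :=
  ∃ f : W → V, Function.Injective f ∧ (∀ a, f a ∈ A) ∧
    ∀ ⦃a b⦄, H.Adj a b → G.Adj (f a) (f b)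

/-- There is a copy of `H` in `G`. -/
def SimpleGraph.ContainsCopy {W V : Type*} (H : SimpleGraph W) (G : SimpleGraph V) : Prop :=
  H.CopyIn G Set.univ

/-- The disjoint union of `n` copies of `H`, denoted `nH` in the paper. -/
def SimpleGraph.nCopies {W : Type*} (n : ℕ) (H : SimpleGraph W) : SimpleGraph (Fin n × W) where
  Adj x y := x.1 = y.1 ∧ H.Adj x.2 y.2
  symm := ⟨fun x y h => ⟨h.1.symm, h.2.symm⟩⟩
  loopless := ⟨fun x h => H.loopless.1 x.2 h.2⟩

/-- `N` is Ramsey for `H`: every red/blue colouring of the edges of `K_N` (encoded by its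
red graph `R`, the blue graph being `Rᶜ`) contains a monochromatic copy of `H`. -/
def SimpleGraph.RamseyProp {W : Type*} (H : SimpleGraph W) (N : ℕ) : Prop :=
  ∀ R : SimpleGraph (Fin N), H.ContainsCopy R ∨ H.ContainsCopy Rᶜ

/-- The Ramsey number `r(H)`. -/
noncomputable def SimpleGraph.ramsey {W : Type*} (H : SimpleGraph W) : ℕ :=
  sInf {N | H.RamseyProp N}

/-- `I` is an independent set of `G`. -/
def SimpleGraph.IsIndep {V : Type*} (G : SimpleGraph V) (I : Set V) : Prop :=
  I.Pairwise fun a b => ¬ G.Adj a b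

/-- The independence number `α(G)`. -/
noncomputable def SimpleGraph.indepNumber {V : Type*} (G : SimpleGraph V) : ℕ :=
  sSup {n | ∃ I : Finset V, G.IsIndep ↑I ∧ I.card = n}

/-- `I` is an independent set of `G`, maximal with respect to inclusion. -/
def SimpleGraph.IsMaximalIndep {V : Type*} (G : SimpleGraph V) (I : Set V) : Prop :=
  G.IsIndep I ∧ ∀ J : Set V, G.IsIndep J → I ⊆ J → J = I

/-- `R` contains a copy of some member of the family `𝒟(G)` of graphs obtained from `G`
by removing a maximal independent set. -/
def SimpleGraph.ContainsCopyOfD {V U : Type*} (G : SimpleGraph V) (R : SimpleGraph U) : Prop :=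
  ∃ I : Set V, G.IsMaximalIndep I ∧ (G.induce Iᶜ).ContainsCopy R

/-- `R` contains a copy of some connected component of `H`, i.e. of a member of `𝒞(H)`. -/
def SimpleGraph.ContainsCopyOfComp {V U : Type*} (H : SimpleGraph V) (R : SimpleGraph U) :
    Prop :=
  ∃ c : H.ConnectedComponent, (H.induce c.supp).ContainsCopy R

/-- `R` contains a copy of some member of the family `𝒟_c(H)`: graphs obtained by removing a
maximal independent set of `H` and taking a connected component of the remainder. -/
def SimpleGraph.ContainsCopyOfDc {V U : Type*} (H : SimpleGraph V) (R : SimpleGraph U) : Prop :=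
  ∃ I : Set V, H.IsMaximalIndep I ∧
    ∃ c : (H.induce Iᶜ).ConnectedComponent, ((H.induce Iᶜ).induce c.supp).ContainsCopy R

/-- `R` contains a copy of some member of the family `𝒟'_c(H)`: graphs obtained by removing an
independent set of `H` of maximum size `α(H)` and taking a connected component of the
remainder. -/
def SimpleGraph.ContainsCopyOfDc' {V U : Type*} (H : SimpleGraph V) (R : SimpleGraph U) : Prop :=
  ∃ I : Set V, H.IsIndep I ∧ I.ncard = H.indepNumber ∧
    ∃ c : (H.induce Iᶜ).ConnectedComponent, ((H.induce Iᶜ).induce c.supp).ContainsCopy R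

/-- The asymmetric Ramsey number `r(G, H)`. -/
noncomputable def SimpleGraph.ramsey2 {V W : Type*} (G : SimpleGraph V) (H : SimpleGraph W) :
    ℕ :=
  sInf {N | ∀ R : SimpleGraph (Fin N), G.ContainsCopy R ∨ H.ContainsCopy Rᶜ}

/-- The Ramsey number `r(𝒟(G), H)`. -/
noncomputable def SimpleGraph.ramseyDFam {V W : Type*} (G : SimpleGraph V)
    (H : SimpleGraph W) : ℕ :=
  sInf {N | ∀ R : SimpleGraph (Fin N), G.ContainsCopyOfD R ∨ H.ContainsCopy Rᶜ}

/-- The Ramsey number `r(𝒟(G), 𝒞(H))`. -/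
noncomputable def SimpleGraph.ramseyDCFam {V W : Type*} (G : SimpleGraph V)
    (H : SimpleGraph W) : ℕ :=
  sInf {N | ∀ R : SimpleGraph (Fin N), G.ContainsCopyOfD R ∨ H.ContainsCopyOfComp Rᶜ}

/-- The Ramsey number `r(𝒟_c(H), 𝒟(H))`. -/
noncomputable def SimpleGraph.ramseyDcD {V : Type*} (H : SimpleGraph V) : ℕ :=
  sInf {N | ∀ R : SimpleGraph (Fin N), H.ContainsCopyOfDc R ∨ H.ContainsCopyOfD Rᶜ}

/-- The Ramsey number `r(𝒟'_c(H), 𝒟(H))`. -/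
noncomputable def SimpleGraph.ramseyDc'D {V : Type*} (H : SimpleGraph V) : ℕ :=
  sInf {N | ∀ R : SimpleGraph (Fin N), H.ContainsCopyOfDc' R ∨ H.ContainsCopyOfD Rᶜ}

/-- An `H`-tie in the colouring with red graph `Red`: a set of `2|H| - α(H)` vertices
containing both a red and a blue copy of `H`. -/
def SimpleGraph.IsTie {V : Type*} {k : ℕ} (H : SimpleGraph (Fin k)) (Red : SimpleGraph V)
    (S : Finset V) : Prop :=
  S.card = 2 * k - H.indepNumber ∧ H.CopyIn Red ↑S ∧ H.CopyIn Redᶜ ↑S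

/-- A `K_k`-tiling of `G`: pairwise disjoint `k`-cliques covering all but at most
`|G| mod k` vertices. -/
def SimpleGraph.HasKkTiling {V : Type*} [Fintype V] [DecidableEq V] (G : SimpleGraph V)
    (k : ℕ) : Prop :=
  ∃ T : Finset (Finset V), (∀ S ∈ T, G.IsNClique k S) ∧
    (T : Set (Finset V)).PairwiseDisjoint id ∧
    Fintype.card V - (T.biUnion id).card ≤ Fintype.card V % k

/-- A perfect `K_k`-tiling of `G`: pairwise disjoint `k`-cliques covering all vertices. -/
def SimpleGraph.HasPerfectKkTiling {V : Type*} [Fintype V] [DecidableEq V] (G : SimpleGraph V)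
    (k : ℕ) : Prop :=
  ∃ T : Finset (Finset V), (∀ S ∈ T, G.IsNClique k S) ∧
    (T : Set (Finset V)).PairwiseDisjoint id ∧ T.biUnion id = Finset.univ

/-- `a` and `b` are joined by an edge of colour `c` (where `true` is red and `false` is blue)
in the colouring with red graph `Red`. -/
def SimpleGraph.colorAdj {V : Type*} (Red : SimpleGraph V) (c : Bool) (a b : V) : Prop :=
  if c then Red.Adj a b else Redᶜ.Adj a b

/-!
By the Erdős–Szekeres bound `r(a, b) ≤ 2^(a+b)`, `B` contains a blue `K_{2k-1}` `C`. Halving `R`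
once for each vertex of `C` leaves a set `R₁ ⊆ R` with `|R₁| ≥ |R| / 2^(2k-1) ≥ 2^(2k)` to which
every vertex of `C` is joined in a single colour; `R₁` then contains a red `K_k`, and by pigeonhole
`k` vertices of `C` send the same colour to `R₁`.
-/

namespace SimpleGraph

variable {V : Type*} {G : SimpleGraph V}

lemma card_filter_adj_add_card_filter_compl_adj [DecidableEq V] [DecidableRel G.Adj]
    {S : Finset V} {v : V} (hv : v ∈ S) :
    #(S.filter (G.Adj v)) + #(S.filter (Gᶜ.Adj v)) + 1 = #S := by
  rw [← card_erase_add_one hv, ← card_filter_add_card_filter_not (s := S.erase v) (G.Adj v),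
    filter_erase, erase_eq_of_notMem (by simp)]
  congr 3
  ext u
  simp only [mem_filter, mem_erase, compl_adj]
  tauto

lemma two_pow_le_card_filter_adj_or_compl_adj [DecidableEq V] [DecidableRel G.Adj]
    {S : Finset V} {v : V} (hv : v ∈ S) {n : ℕ} (hS : 2 ^ (n + 1) ≤ #S) :
    2 ^ n ≤ #(S.filter (G.Adj v)) ∨ 2 ^ n ≤ #(S.filter (Gᶜ.Adj v)) := by
  have := card_filter_adj_add_card_filter_compl_adj (G := G) hv
  rw [pow_succ] at hS
  omega

lemma exists_isNClique_insert [DecidableEq V] [DecidableRel G.Adj] {S T : Finset V} {v : V}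
    {n : ℕ} (hv : v ∈ S) (hT : T ⊆ S.filter (G.Adj v)) (hc : G.IsNClique n T) :
    ∃ T' ⊆ S, G.IsNClique (n + 1) T' :=
  ⟨insert v T, insert_subset hv (hT.trans (filter_subset _ _)),
    hc.insert fun _ hu => (mem_filter.mp (hT hu)).2⟩

theorem exists_isNClique_or_isNClique_compl (G : SimpleGraph V) :
    ∀ (a b : ℕ) (S : Finset V), 2 ^ (a + b) ≤ #S →
      (∃ T ⊆ S, G.IsNClique a T) ∨ ∃ T ⊆ S, Gᶜ.IsNClique b T
  | 0, _, _, _ => .inl ⟨∅, empty_subset _, by simp⟩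
  | _ + 1, 0, _, _ => .inr ⟨∅, empty_subset _, by simp⟩
  | a + 1, b + 1, S, hS => by
    classical
    obtain ⟨v, hv⟩ : S.Nonempty := card_pos.mp (lt_of_lt_of_le (by positivity) hS)
    rcases two_pow_le_card_filter_adj_or_compl_adj (G := G) hv (n := a + b + 1)
      (by rwa [Nat.add_add_add_comm] at hS) with hN | hM
    · rcases exists_isNClique_or_isNClique_compl G a (b + 1) _ hN with ⟨T, hT, hc⟩ | ⟨T, hT, hc⟩
      · exact .inl (exists_isNClique_insert hv hT hc)
      · exact .inr ⟨T, hT.trans (filter_subset _ _), hc⟩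
    · rcases exists_isNClique_or_isNClique_compl G (a + 1) b _ (by rwa [Nat.add_right_comm])
        with ⟨T, hT, hc⟩ | ⟨T, hT, hc⟩
      · exact .inl ⟨T, hT.trans (filter_subset _ _), hc⟩
      · exact .inr (exists_isNClique_insert hv hT hc)

lemma join_of_forall_adj_iff {R B : Finset V} (hdisj : Disjoint R B) {q : Prop}
    (h : ∀ a ∈ R, ∀ b ∈ B, G.Adj a b ↔ q) :
    (∀ a ∈ R, ∀ b ∈ B, G.Adj a b) ∨ ∀ a ∈ R, ∀ b ∈ B, Gᶜ.Adj a b := by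
  by_cases hq : q
  · exact .inl fun a ha b hb => (h a ha b hb).mpr hq
  · exact .inr fun a ha b hb =>
      ⟨fun hab => Finset.disjoint_left.mp hdisj ha (hab ▸ hb),
        fun hadj => hq ((h a ha b hb).mp hadj)⟩

end SimpleGraph

lemma Finset.exists_subset_card_le_two_mul_forall_iff {α : Type*} (s : Finset α) (p : α → Prop) :
    ∃ q : Prop, ∃ t ⊆ s, #s ≤ 2 * #t ∧ ∀ x ∈ t, p x ↔ q := by
  classical
  have := card_filter_add_card_filter_not (s := s) p
  by_cases h : #s ≤ 2 * #(s.filter p)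
  · exact ⟨True, _, filter_subset _ _, h, by simp +contextual⟩
  · exact ⟨False, s.filter (¬ p ·), filter_subset _ _, by omega, by simp +contextual⟩

theorem Finset.exists_subset_card_le_two_pow_mul_forall_iff {α β : Type*} (rel : α → β → Prop)
    (C : Finset α) (R : Finset β) :
    ∃ R' ⊆ R, ∃ p : α → Prop, #R ≤ 2 ^ #C * #R' ∧ ∀ c ∈ C, ∀ r ∈ R', (rel c r ↔ p c) := by
  classical
  induction C using Finset.induction_on with
  | empty => exact ⟨R, Subset.rfl, fun _ => True, by simp, by simp⟩
  | @insert c C hc ih =>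
    obtain ⟨R', hR', p, hcard, hp⟩ := ih
    obtain ⟨q, R'', hR'', hhalf, hq⟩ := R'.exists_subset_card_le_two_mul_forall_iff (rel c)
    refine ⟨R'', hR''.trans hR', Function.update p c q, ?_, ?_⟩
    · calc #R ≤ 2 ^ #C * #R' := hcard
        _ ≤ 2 ^ #C * (2 * #R'') := Nat.mul_le_mul_left _ hhalf
        _ = _ := by rw [card_insert_of_notMem hc, pow_succ, mul_assoc]
    · intro d hd r hr
      rcases mem_insert.mp hd with rfl | hd
      · simpa using hq r hr
      · rw [Function.update_of_ne (ne_of_mem_of_not_mem hd hc)]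
        exact hp d hd r (hR'' hr)

open SimpleGraph

theorem exists_join_general {V : Type*} (k : ℕ)
    (Red : SimpleGraph V) (R B : Finset V) (hdisj : Disjoint R B)
    (hR : 2 ^ (5 * k) ≤ R.card) (hB : 2 ^ (5 * k) ≤ B.card)
    (hRnoBlue : ¬ ∃ S : Finset V, S ⊆ R ∧ Redᶜ.IsNClique k S)
    (hBnoRed : ¬ ∃ S : Finset V, S ⊆ B ∧ Red.IsNClique k S) :
    ∃ R' B' : Finset V, R' ⊆ R ∧ B' ⊆ B ∧ Red.IsNClique k R' ∧ Redᶜ.IsNClique k B' ∧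
      ((∀ a ∈ R', ∀ b ∈ B', Red.Adj a b) ∨ (∀ a ∈ R', ∀ b ∈ B', Redᶜ.Adj a b)) := by
  obtain ⟨C, hCB, hC⟩ : ∃ C ⊆ B, Redᶜ.IsNClique (2 * k - 1) C :=
    (Red.exists_isNClique_or_isNClique_compl k (2 * k - 1) B
      ((Nat.pow_le_pow_right two_pos (by omega)).trans hB)).resolve_left hBnoRed
  obtain ⟨R₁, hR₁R, p, hR₁card, hp⟩ := exists_subset_card_le_two_pow_mul_forall_iff Red.Adj C R
  have hR₁ : 2 ^ (k + k) ≤ #R₁ := by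
    refine Nat.le_of_mul_le_mul_left ?_ (pow_pos two_pos #C)
    calc 2 ^ #C * 2 ^ (k + k) ≤ 2 ^ (5 * k) := by
          rw [← pow_add, hC.2]; exact Nat.pow_le_pow_right two_pos (by omega)
      _ ≤ 2 ^ #C * #R₁ := hR.trans hR₁card
  obtain ⟨R', hR'R₁, hR'⟩ := (Red.exists_isNClique_or_isNClique_compl k k R₁ hR₁).resolve_right
    fun ⟨T, hT, hc⟩ => hRnoBlue ⟨T, hT.trans hR₁R, hc⟩
  obtain ⟨q, C', hC'C, hC'card, hq⟩ := C.exists_subset_card_le_two_mul_forall_iff p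
  obtain ⟨B', hB'C', hB'⟩ := exists_subset_card_eq (show k ≤ #C' by have := hC.2; omega)
  have hB'C : B' ⊆ C := hB'C'.trans hC'C
  have hR'R : R' ⊆ R := hR'R₁.trans hR₁R
  refine ⟨R', B', hR'R, hB'C.trans hCB, hR', ⟨hC.1.subset (coe_subset.mpr hB'C), hB'⟩,
    join_of_forall_adj_iff (hdisj.mono hR'R (hB'C.trans hCB)) (q := q) fun a ha b hb => ?_⟩
  exact (Red.adj_comm a b).trans <| (hp b (hB'C hb) a (hR'R₁ ha)).trans (hq b (hB'C' hb))

/-- Lemma 2.2. Given a 2-coloured complete graph whose vertices are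
partitioned into sets `R` and `B`, each of size at least `2^(5k)`, such that `R` has no blue
`K_k` and `B` has no red `K_k`, there is a `(k,k)`-join with red part in `R` and blue part
in `B`. -/
theorem exists_join {V : Type*} [Fintype V] [DecidableEq V] (k : ℕ) (hk : 0 < k)
    (Red : SimpleGraph V) (R B : Finset V) (hdisj : Disjoint R B)
    (hcover : R ∪ B = Finset.univ)
    (hR : 2 ^ (5 * k) ≤ R.card) (hB : 2 ^ (5 * k) ≤ B.card)
    (hRnoBlue : ¬ ∃ S : Finset V, S ⊆ R ∧ Redᶜ.IsNClique k S)
    (hBnoRed : ¬ ∃ S : Finset V, S ⊆ B ∧ Red.IsNClique k S) :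
    ∃ R' B' : Finset V, R' ⊆ R ∧ B' ⊆ B ∧ Red.IsNClique k R' ∧ Redᶜ.IsNClique k B' ∧
      ((∀ a ∈ R', ∀ b ∈ B', Red.Adj a b) ∨ (∀ a ∈ R', ∀ b ∈ B', Redᶜ.Adj a b)) :=
  exists_join_general k Red R B hdisj hR hB hRnoBlue hBnoRed
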